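/- arXiv:1804.09031 — 2 statements merged into one kernel-verified Lean document; each statement's English description precedes it below -/
import Mathlib

section
/- Let G be a simple graph with a 4-correspondence assignment C. Let v be a vertex of degree 4 with neighbors v₁, v₂, v₃, v₄, where v₁ and v₃ also have degree 4, and suppose the edges vv₂ and vv₄ are straight in C. If φ is a C-coloring of the induced subgraph G − {v₁, v, v₃} (with C restricted to its edges) satisfying φ(v₂) = φ(v₄), then φ extends to a C-coloring of all of G. -/
/-- Let `G` be a simple graph with a `4`-correspondence assignment `C`
(encoded by `M`).  Let `v` have degree `4` with neighbors `v₁, v₂, v₃, v₄`, where `v₁`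
and `v₃` also have degree `4`, and suppose the edges `v v₂` and `v v₄` are straight in
`C`.  If `φ` is a `C`-coloring of `G - {v₁, v, v₃}` with `φ v₂ = φ v₄`, then `φ` extends
to a `C`-coloring of all of `G`. -/
theorem stmt_5 {V : Type*} [Fintype V] (G : SimpleGraph V) [DecidableRel G.Adj]
    (M : V → V → Fin 4 → Fin 4 → Prop)
    (hsymm : ∀ u v, G.Adj u v → ∀ c c', M u v c c' → M v u c' c)
    (hmatch : ∀ u v, G.Adj u v → ∀ c c₁ c₂, M u v c c₁ → M u v c c₂ → c₁ = c₂)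
    (v v₁ v₂ v₃ v₄ : V)
    (hdistinct : [v₁, v₂, v₃, v₄].Nodup)
    (hN : G.neighborSet v = {v₁, v₂, v₃, v₄})
    (hdv : G.degree v = 4)
    (hd1 : G.degree v₁ = 4) (hd3 : G.degree v₃ = 4)
    (hstraight2 : ∀ c c' : Fin 4, M v v₂ c c' → c = c')
    (hstraight4 : ∀ c c' : Fin 4, M v v₄ c c' → c = c')
    (φ : V → Fin 4)
    (hφ : ∀ u w, u ∉ ({v₁, v, v₃} : Set V) → w ∉ ({v₁, v, v₃} : Set V) →
      G.Adj u w → ¬ M u w (φ u) (φ w))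
    (h24 : φ v₂ = φ v₄) :
    ∃ φ' : V → Fin 4,
      (∀ u, u ∉ ({v₁, v, v₃} : Set V) → φ' u = φ u) ∧
      (∀ u w, G.Adj u w → ¬ M u w (φ' u) (φ' w)) := by
  classical
  simp only [List.nodup_cons, List.mem_cons, List.not_mem_nil, or_false, not_or,
    List.nodup_nil, and_true] at hdistinct
  obtain ⟨⟨h12, h13, h14⟩, ⟨h23, h24''⟩, h34, -⟩ := hdistinct
  have hmem : ∀ w, G.Adj v w ↔ w = v₁ ∨ w = v₂ ∨ w = v₃ ∨ w = v₄ := by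
    intro w
    rw [← SimpleGraph.mem_neighborSet, hN]
    simp [Set.mem_insert_iff]
  have hadj1 : G.Adj v v₁ := (hmem v₁).2 (by tauto)
  have hadj2 : G.Adj v v₂ := (hmem v₂).2 (by tauto)
  have hadj3 : G.Adj v v₃ := (hmem v₃).2 (by tauto)
  have hadj4 : G.Adj v v₄ := (hmem v₄).2 (by tauto)
  have hv1 : v ≠ v₁ := hadj1.ne
  have hv2 : v ≠ v₂ := hadj2.ne
  have hv3 : v ≠ v₃ := hadj3.ne
  have hv4 : v ≠ v₄ := hadj4.ne
  -- forbidden colors for x coming from a colored neighbor w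
  set forb : V → V → Finset (Fin 4) :=
    fun x w => Finset.univ.filter (fun cc => M x w cc (φ w)) with hforbdef
  have hforb : ∀ x w, G.Adj x w → (forb x w).card ≤ 1 := by
    intro x w hxw
    refine Finset.card_le_one.2 ?_
    intro a ha b hb
    simp only [hforbdef, Finset.mem_filter, Finset.mem_univ, true_and] at ha hb
    exact hmatch w x hxw.symm (φ w) a b (hsymm x w hxw a (φ w) ha) (hsymm x w hxw b (φ w) hb)
  set T₁ : Finset V := ((G.neighborFinset v₁).erase v₃).erase v with hT1def
  set T₃ : Finset V := ((G.neighborFinset v₃).erase v₁).erase v with hT3def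
  have hmemT1 : ∀ w ∈ T₁, G.Adj v₁ w := by
    intro w hw
    simp only [hT1def, Finset.mem_erase, SimpleGraph.mem_neighborFinset] at hw
    exact hw.2.2
  have hmemT3 : ∀ w ∈ T₃, G.Adj v₃ w := by
    intro w hw
    simp only [hT3def, Finset.mem_erase, SimpleGraph.mem_neighborFinset] at hw
    exact hw.2.2
  have hT1card : T₁.card = (if G.Adj v₁ v₃ then 2 else 3) := by
    have hvmem : v ∈ (G.neighborFinset v₁).erase v₃ := by
      simp [Finset.mem_erase, SimpleGraph.mem_neighborFinset, hv3, hadj1.symm]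
    rw [hT1def, Finset.card_erase_of_mem hvmem]
    by_cases h13' : G.Adj v₁ v₃
    · rw [Finset.card_erase_of_mem (by simpa [SimpleGraph.mem_neighborFinset] using h13'),
        SimpleGraph.card_neighborFinset_eq_degree, hd1]
      simp [h13']
    · rw [Finset.erase_eq_of_notMem (by simpa [SimpleGraph.mem_neighborFinset] using h13'),
        SimpleGraph.card_neighborFinset_eq_degree, hd1]
      simp [h13']
  have hT3card : T₃.card = (if G.Adj v₁ v₃ then 2 else 3) := by
    have hvmem : v ∈ (G.neighborFinset v₃).erase v₁ := by
      simp [Finset.mem_erase, SimpleGraph.mem_neighborFinset, hv1, hadj3.symm]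
    rw [hT3def, Finset.card_erase_of_mem hvmem]
    by_cases h13' : G.Adj v₁ v₃
    · rw [Finset.card_erase_of_mem
        (by simpa [SimpleGraph.mem_neighborFinset] using h13'.symm),
        SimpleGraph.card_neighborFinset_eq_degree, hd3]
      simp [h13']
    · rw [Finset.erase_eq_of_notMem
        (by simp [SimpleGraph.mem_neighborFinset]; exact fun h => h13' h.symm),
        SimpleGraph.card_neighborFinset_eq_degree, hd3]
      simp [h13']
  set Forb₁ : Finset (Fin 4) := T₁.biUnion (fun w => forb v₁ w) with hF1def
  set Forb₃ : Finset (Fin 4) := T₃.biUnion (fun w => forb v₃ w) with hF3def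
  have hF1card : Forb₁.card ≤ T₁.card := by
    simpa using Finset.card_biUnion_le_card_mul T₁ (fun w => forb v₁ w) 1
      (fun w hw => hforb v₁ w (hmemT1 w hw))
  have hF3card : Forb₃.card ≤ T₃.card := by
    simpa using Finset.card_biUnion_le_card_mul T₃ (fun w => forb v₃ w) 1
      (fun w hw => hforb v₃ w (hmemT3 w hw))
  have hpick : ∀ X : Finset (Fin 4), X.card ≤ 3 → ∃ c : Fin 4, c ∉ X := by
    intro X hX
    by_contra h
    push_neg at h
    have : (Finset.univ : Finset (Fin 4)) ⊆ X := fun a _ => h a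
    have := Finset.card_le_card this
    simp at this
    omega
  -- choose c₁
  obtain ⟨c₁, hc₁⟩ : ∃ c : Fin 4, c ∉ Forb₁ :=
    hpick _ (le_trans hF1card (by rw [hT1card]; split <;> omega))
  -- choose c₃
  set bad₃ : Finset (Fin 4) :=
    Finset.univ.filter (fun cc => G.Adj v₁ v₃ ∧ M v₁ v₃ c₁ cc) with hbad3def
  have hbad3card : bad₃.card ≤ 1 := by
    refine Finset.card_le_one.2 ?_
    intro a ha b hb
    simp only [hbad3def, Finset.mem_filter, Finset.mem_univ, true_and] at ha hb
    exact hmatch v₁ v₃ ha.1 c₁ a b ha.2 hb.2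
  obtain ⟨c₃, hc₃⟩ : ∃ c : Fin 4, c ∉ Forb₃ ∪ bad₃ := by
    refine hpick _ (le_trans (Finset.card_union_le _ _) ?_)
    by_cases h13' : G.Adj v₁ v₃
    · have h0 : bad₃.card ≤ 1 := hbad3card
      have h1 : Forb₃.card ≤ 2 := le_trans hF3card (by rw [hT3card]; simp [h13'])
      omega
    · have h0 : bad₃.card = 0 := by
        rw [Finset.card_eq_zero]
        ext a
        simp [hbad3def, h13']
      have h1 : Forb₃.card ≤ 3 := le_trans hF3card (by rw [hT3card]; simp [h13'])
      omega
  have hc₃F : c₃ ∉ Forb₃ := fun h => hc₃ (Finset.mem_union_left _ h)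
  have hc₃b : G.Adj v₁ v₃ → ¬ M v₁ v₃ c₁ c₃ := by
    intro ha hm
    exact hc₃ (Finset.mem_union_right _ (by simp [hbad3def, ha, hm]))
  -- choose c
  set badc : Finset (Fin 4) :=
    {φ v₂} ∪ Finset.univ.filter (fun cc => M v v₁ cc c₁)
      ∪ Finset.univ.filter (fun cc => M v v₃ cc c₃) with hbadcdef
  obtain ⟨c, hc⟩ : ∃ cc : Fin 4, cc ∉ badc := by
    refine hpick _ ?_
    have k1 : (Finset.univ.filter (fun cc => M v v₁ cc c₁)).card ≤ 1 := by
      refine Finset.card_le_one.2 ?_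
      intro a ha b hb
      simp only [Finset.mem_filter, Finset.mem_univ, true_and] at ha hb
      exact hmatch v₁ v hadj1.symm c₁ a b (hsymm v v₁ hadj1 a c₁ ha) (hsymm v v₁ hadj1 b c₁ hb)
    have k3 : (Finset.univ.filter (fun cc => M v v₃ cc c₃)).card ≤ 1 := by
      refine Finset.card_le_one.2 ?_
      intro a ha b hb
      simp only [Finset.mem_filter, Finset.mem_univ, true_and] at ha hb
      exact hmatch v₃ v hadj3.symm c₃ a b (hsymm v v₃ hadj3 a c₃ ha) (hsymm v v₃ hadj3 b c₃ hb)
    calc badc.card ≤ ({φ v₂} ∪ Finset.univ.filter (fun cc => M v v₁ cc c₁) : Finset (Fin 4)).card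
        + (Finset.univ.filter (fun cc => M v v₃ cc c₃)).card := Finset.card_union_le _ _
      _ ≤ (({φ v₂} : Finset (Fin 4)).card
        + (Finset.univ.filter (fun cc => M v v₁ cc c₁)).card)
        + (Finset.univ.filter (fun cc => M v v₃ cc c₃)).card := by
          exact Nat.add_le_add_right (Finset.card_union_le _ _) _
      _ ≤ 3 := by simp; omega
  have hcne2 : c ≠ φ v₂ := by
    intro h
    exact hc (by simp [hbadcdef, h])
  have hc1M : ¬ M v v₁ c c₁ := by
    intro h
    exact hc (by simp [hbadcdef, h])
  have hc3M : ¬ M v v₃ c c₃ := by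
    intro h
    exact hc (by simp [hbadcdef, h])
  -- define the extension
  set φ' : V → Fin 4 := fun u => if u = v₁ then c₁ else if u = v then c else if u = v₃ then c₃
    else φ u with hφ'def
  have hout : ∀ u, u ∉ ({v₁, v, v₃} : Set V) → φ' u = φ u := by
    intro u hu
    simp only [Set.mem_insert_iff, Set.mem_singleton_iff, not_or] at hu
    simp [hφ'def, hu.1, hu.2.1, hu.2.2]
  have hval1 : φ' v₁ = c₁ := by simp [hφ'def]
  have hvalv : φ' v = c := by simp [hφ'def, hv1]
  have hval3 : φ' v₃ = c₃ := by simp [hφ'def, Ne.symm h13, Ne.symm hv3]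
  have hnot2 : v₂ ∉ ({v₁, v, v₃} : Set V) := by
    simp [Ne.symm h12, Ne.symm hv2, h23]
  have hnot4 : v₄ ∉ ({v₁, v, v₃} : Set V) := by
    simp [Ne.symm h14, Ne.symm hv4, Ne.symm h34]
  refine ⟨φ', hout, ?_⟩
  -- the three direct edge lemmas
  have hedge_v : ∀ w, G.Adj v w → ¬ M v w (φ' v) (φ' w) := by
    intro w hw
    rw [hvalv]
    rcases (hmem w).1 hw with rfl | rfl | rfl | rfl
    · rw [hval1]; exact hc1M
    · rw [hout _ hnot2]
      intro h
      exact hcne2 (hstraight2 _ _ h)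
    · rw [hval3]; exact hc3M
    · rw [hout _ hnot4]
      intro h
      exact hcne2 (by rw [h24]; exact hstraight4 _ _ h)
  have hedge_v1 : ∀ w, G.Adj v₁ w → ¬ M v₁ w (φ' v₁) (φ' w) := by
    intro w hw
    rw [hval1]
    by_cases hwv : w = v
    · rw [hwv, hvalv]
      intro h
      have h2 := hedge_v v₁ hadj1
      rw [hvalv, hval1] at h2
      exact h2 (hsymm v₁ v (hwv ▸ hw) c₁ c h)
    by_cases hwv3 : w = v₃
    · rw [hwv3, hval3]
      exact hc₃b (hwv3 ▸ hw)
    · have hwT : w ∈ T₁ := by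
        simp [hT1def, Finset.mem_erase, SimpleGraph.mem_neighborFinset, hwv, hwv3, hw]
      have hwout : w ∉ ({v₁, v, v₃} : Set V) := by
        simp [hw.ne', hwv, hwv3]
      rw [hout _ hwout]
      intro h
      exact hc₁ (Finset.mem_biUnion.2 ⟨w, hwT, by simp [hforbdef, h]⟩)
  have hedge_v3 : ∀ w, G.Adj v₃ w → ¬ M v₃ w (φ' v₃) (φ' w) := by
    intro w hw
    rw [hval3]
    by_cases hwv : w = v
    · rw [hwv, hvalv]
      intro h
      have h2 := hedge_v v₃ hadj3
      rw [hvalv, hval3] at h2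
      exact h2 (hsymm v₃ v (hwv ▸ hw) c₃ c h)
    by_cases hwv1 : w = v₁
    · rw [hwv1, hval1]
      intro h
      exact hc₃b (hwv1 ▸ hw).symm (hsymm v₃ v₁ (hwv1 ▸ hw) c₃ c₁ h)
    · have hwT : w ∈ T₃ := by
        simp [hT3def, Finset.mem_erase, SimpleGraph.mem_neighborFinset, hwv, hwv1, hw]
      have hwout : w ∉ ({v₁, v, v₃} : Set V) := by
        simp [hwv1, hwv, hw.ne']
      rw [hout _ hwout]
      intro h
      exact hc₃F (Finset.mem_biUnion.2 ⟨w, hwT, by simp [hforbdef, h]⟩)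
  intro u w huw
  by_cases hu1 : u = v₁
  · subst hu1; exact hedge_v1 w huw
  by_cases huv : u = v
  · subst huv; exact hedge_v w huw
  by_cases hu3 : u = v₃
  · subst hu3; exact hedge_v3 w huw
  by_cases hw1 : w = v₁
  · rw [hw1]
    intro h
    exact hedge_v1 u (hw1 ▸ huw).symm (hsymm u v₁ (hw1 ▸ huw) _ _ h)
  by_cases hwv : w = v
  · rw [hwv]
    intro h
    exact hedge_v u (hwv ▸ huw).symm (hsymm u v (hwv ▸ huw) _ _ h)
  by_cases hw3 : w = v₃
  · rw [hw3]
    intro h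
    exact hedge_v3 u (hw3 ▸ huw).symm (hsymm u v₃ (hw3 ▸ huw) _ _ h)
  · have huout : u ∉ ({v₁, v, v₃} : Set V) := by simp [hu1, huv, hu3]
    have hwout : w ∉ ({v₁, v, v₃} : Set V) := by simp [hw1, hwv, hw3]
    rw [hout _ huout, hout _ hwout]
    exact hφ u w huout hwout huw
end

section
/- Let G be a simple graph with a 4-correspondence assignment C. Let v be a vertex of degree 4 with neighbors v₁, v₂, v₃, v₄, where v₁ has degree 4, and suppose the edges vv₂ and vv₄ are straight in C. If φ is a C-coloring of the induced subgraph G − {v₁, v} (with C restricted to its edges) satisfying φ(v₂) = φ(v₄), then φ extends to a C-coloring of all of G. -/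
lemma fin4_avoid : ∀ a b c : Fin 4, ∃ d : Fin 4, d ≠ a ∧ d ≠ b ∧ d ≠ c := by decide

/-- Let `G` be a simple graph with a `4`-correspondence assignment `C`
(encoded by `M`).  Let `v` have degree `4` with neighbors `v₁, v₂, v₃, v₄`, where `v₁`
also has degree `4`, and suppose the edges `v v₂` and `v v₄` are straight in `C`.  If
`φ` is a `C`-coloring of `G - {v₁, v}` with `φ v₂ = φ v₄`, then `φ` extends to a
`C`-coloring of all of `G`. -/
theorem stmt_6 {V : Type*} [Fintype V] (G : SimpleGraph V) [DecidableRel G.Adj]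
    (M : V → V → Fin 4 → Fin 4 → Prop)
    (hsymm : ∀ u v, G.Adj u v → ∀ c c', M u v c c' → M v u c' c)
    (hmatch : ∀ u v, G.Adj u v → ∀ c c₁ c₂, M u v c c₁ → M u v c c₂ → c₁ = c₂)
    (v v₁ v₂ v₃ v₄ : V)
    (hdistinct : [v₁, v₂, v₃, v₄].Nodup)
    (hN : G.neighborSet v = {v₁, v₂, v₃, v₄})
    (hdv : G.degree v = 4)
    (hd1 : G.degree v₁ = 4)
    (hstraight2 : ∀ c c' : Fin 4, M v v₂ c c' → c = c')
    (hstraight4 : ∀ c c' : Fin 4, M v v₄ c c' → c = c')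
    (φ : V → Fin 4)
    (hφ : ∀ u w, u ∉ ({v₁, v} : Set V) → w ∉ ({v₁, v} : Set V) →
      G.Adj u w → ¬ M u w (φ u) (φ w))
    (h24 : φ v₂ = φ v₄) :
    ∃ φ' : V → Fin 4,
      (∀ u, u ∉ ({v₁, v} : Set V) → φ' u = φ u) ∧
      (∀ u w, G.Adj u w → ¬ M u w (φ' u) (φ' w)) := by
  classical
  -- basic adjacencies
  have hadjmem : ∀ w, G.Adj v w ↔ w ∈ ({v₁, v₂, v₃, v₄} : Set V) := by
    intro w
    rw [← SimpleGraph.mem_neighborSet, hN]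
  have hA1 : G.Adj v v₁ := (hadjmem v₁).2 (by simp)
  have hA2 : G.Adj v v₂ := (hadjmem v₂).2 (by simp)
  have hA3 : G.Adj v v₃ := (hadjmem v₃).2 (by simp)
  have hA4 : G.Adj v v₄ := (hadjmem v₄).2 (by simp)
  -- partner function
  set p : V → V → Fin 4 → Fin 4 := fun u w b =>
    if h : ∃ e, M u w e b then h.choose else 0 with hp
  have hpspec : ∀ u w, G.Adj u w → ∀ e b, M u w e b → e = p u w b := by
    intro u w hadj e b hM
    have hex : ∃ e, M u w e b := ⟨e, hM⟩
    have h1 : M u w hex.choose b := hex.choose_spec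
    have h2 : M w u b hex.choose := hsymm u w hadj _ _ h1
    have h3 : M w u b e := hsymm u w hadj _ _ hM
    have := hmatch w u hadj.symm b e hex.choose h3 h2
    simp only [hp, dif_pos hex]
    exact this
  -- the three other neighbors of v₁
  have hA1v : G.Adj v₁ v := hA1.symm
  have hvmem : v ∈ G.neighborFinset v₁ := by
    simp [SimpleGraph.mem_neighborFinset, hA1v]
  have hcard : ((G.neighborFinset v₁).erase v).card = 3 := by
    rw [Finset.card_erase_of_mem hvmem]
    have h4 : (G.neighborFinset v₁).card = 4 := hd1
    omega
  obtain ⟨x, y, z, hxy, hxz, hyz, hs⟩ := Finset.card_eq_three.1 hcard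
  -- pick a color for v₁
  obtain ⟨d, hdx, hdy, hdz⟩ := fin4_avoid (p v₁ x (φ x)) (p v₁ y (φ y)) (p v₁ z (φ z))
  -- pick a color for v
  obtain ⟨c, hc2, hc3, hc1⟩ := fin4_avoid (φ v₂) (p v v₃ (φ v₃)) (p v v₁ d)
  -- the new coloring
  set φ' : V → Fin 4 := fun u => if u = v then c else if u = v₁ then d else φ u with hφ'
  have hφ'v : φ' v = c := by simp only [hφ', if_pos rfl]
  have hv1ne : v₁ ≠ v := hA1.ne'
  have hφ'v1 : φ' v₁ = d := by simp only [hφ']; rw [if_neg hv1ne]; simp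
  have hφ'out : ∀ u, u ∉ ({v₁, v} : Set V) → φ' u = φ u := by
    intro u hu
    simp only [Set.mem_insert_iff, Set.mem_singleton_iff, not_or] at hu
    simp only [hφ', if_neg hu.2, if_neg hu.1]
  refine ⟨φ', hφ'out, ?_⟩
  -- membership facts
  have hnodup := hdistinct
  simp only [List.nodup_cons, List.mem_cons, List.not_mem_nil, or_false,
    List.mem_singleton, not_or, List.nodup_nil, and_true] at hnodup
  have h2ne1 : v₂ ≠ v₁ := fun h => hnodup.1.1 h.symm
  have h3ne1 : v₃ ≠ v₁ := fun h => hnodup.1.2.1 h.symm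
  have h4ne1 : v₄ ≠ v₁ := fun h => hnodup.1.2.2 h.symm
  have h2nev : v₂ ≠ v := hA2.ne'
  have h3nev : v₃ ≠ v := hA3.ne'
  have h4nev : v₄ ≠ v := hA4.ne'
  have hout2 : v₂ ∉ ({v₁, v} : Set V) := by simp [h2ne1, h2nev]
  have hout3 : v₃ ∉ ({v₁, v} : Set V) := by simp [h3ne1, h3nev]
  have hout4 : v₄ ∉ ({v₁, v} : Set V) := by simp [h4ne1, h4nev]
  -- key: no conflict on edges at v
  have keyv : ∀ w, G.Adj v w → ¬ M v w c (φ' w) := by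
    intro w hadj hM
    have hw := (hadjmem w).1 hadj
    simp only [Set.mem_insert_iff, Set.mem_singleton_iff] at hw
    rcases hw with hw | hw | hw | hw
    · rw [hw, hφ'v1] at hM
      exact hc1 (hpspec v v₁ hA1 c d hM)
    · rw [hw, hφ'out _ hout2] at hM
      exact hc2 (hstraight2 _ _ hM)
    · rw [hw, hφ'out _ hout3] at hM
      exact hc3 (hpspec v v₃ hA3 c (φ v₃) hM)
    · rw [hw, hφ'out _ hout4] at hM
      rw [← h24] at hM
      exact hc2 (hstraight4 _ _ hM)
  -- key: no conflict on edges at v₁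
  have keyv1 : ∀ w, G.Adj v₁ w → ¬ M v₁ w d (φ' w) := by
    intro w hadj hM
    by_cases hwv : w = v
    · rw [hwv, hφ'v] at hM
      rw [hwv] at hadj
      have := hsymm v₁ v hadj d c hM
      exact hc1 (hpspec v v₁ hA1 c d this)
    · have hwmem : w ∈ ({x, y, z} : Finset V) := by
        rw [← hs]
        simp [Finset.mem_erase, hwv, SimpleGraph.mem_neighborFinset, hadj]
      have hwne1 : w ≠ v₁ := hadj.ne'
      have hwout : w ∉ ({v₁, v} : Set V) := by simp [hwne1, hwv]
      rw [hφ'out _ hwout] at hM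
      simp only [Finset.mem_insert, Finset.mem_singleton] at hwmem
      rcases hwmem with hw | hw | hw
      · subst hw; exact hdx (hpspec v₁ w hadj d (φ w) hM)
      · subst hw; exact hdy (hpspec v₁ w hadj d (φ w) hM)
      · subst hw; exact hdz (hpspec v₁ w hadj d (φ w) hM)
  -- main verification
  intro u w hadj hM
  by_cases huv : u = v
  · rw [huv, hφ'v] at hM
    rw [huv] at hadj
    exact keyv w hadj hM
  by_cases hu1 : u = v₁
  · rw [hu1, hφ'v1] at hM
    rw [hu1] at hadj
    exact keyv1 w hadj hM
  by_cases hwv : w = v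
  · rw [hwv, hφ'v] at hM
    rw [hwv] at hadj
    exact keyv u hadj.symm (hsymm u v hadj _ _ hM)
  by_cases hw1 : w = v₁
  · rw [hw1, hφ'v1] at hM
    rw [hw1] at hadj
    exact keyv1 u hadj.symm (hsymm u v₁ hadj _ _ hM)
  · have huout : u ∉ ({v₁, v} : Set V) := by simp [hu1, huv]
    have hwout : w ∉ ({v₁, v} : Set V) := by simp [hw1, hwv]
    rw [hφ'out _ huout, hφ'out _ hwout] at hM
    exact hφ u w huout hwout hadj hM
end
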